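/- Let γ > 0 and let a1, a2, a3 be nonnegative real numbers which are pairwise distinct (a1 ≠ a2, a1 ≠ a3, a2 ≠ a3). Then the four eigenvalues 0, −2γ(a1+a2), −2γ(a1+a3), −2γ(a2+a3) of the generator L = γ( a1 · σ1⊗σ1 + a2 · σ2ᵀ⊗σ2 + a3 · σ3⊗σ3 − (a1+a2+a3) · I₄ ) are pairwise distinct, and consequently for every λ ∈ ℂ the kernel of L − λ·I₄ has dimension at most 1 (the index of cyclicity of L equals 1). -/

import Mathlib

open Matrix Complex Kronecker

noncomputable section

/-- The Pauli matrices. -/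
def pauli1 : Matrix (Fin 2) (Fin 2) ℂ := !![0, 1; 1, 0]
def pauli2 : Matrix (Fin 2) (Fin 2) ℂ := !![0, -I; I, 0]
def pauli3 : Matrix (Fin 2) (Fin 2) ℂ := !![1, 0; 0, -1]

/-- The generator of evolution
`L = γ( a1 σ1⊗σ1 + a2 σ2ᵀ⊗σ2 + a3 σ3⊗σ3 − (a1+a2+a3) I₄ )`. -/
def gen2 (γ a1 a2 a3 : ℝ) : Matrix (Fin 2 × Fin 2) (Fin 2 × Fin 2) ℂ :=
  (γ : ℂ) • ((a1 : ℂ) • (pauli1 ⊗ₖ pauli1) + (a2 : ℂ) • (pauli2ᵀ ⊗ₖ pauli2)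
    + (a3 : ℂ) • (pauli3 ⊗ₖ pauli3)
    - ((a1 + a2 + a3 : ℝ) : ℂ) • (1 : Matrix (Fin 2 × Fin 2) (Fin 2 × Fin 2) ℂ))

/-! The generator is diagonal in the Bell basis: on the four Bell vectors the operators
`σ1⊗σ1`, `σ2ᵀ⊗σ2`, `σ3⊗σ3` act by signs, which gives the eigenvalues `0` and `−2γ(aᵢ+aⱼ)`.
Two distinct nonnegative numbers have positive sum, and pairwise sums of distinct numbers
are distinct, so these eigenvalues are pairwise distinct. Hence for every `λ` at most one
diagonal entry of `L − λ` in this basis vanishes, so `L − λ` has rank at least `3` and a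
kernel of dimension at most `1`. -/

open Module LinearMap Function

namespace Matrix

variable {n K : Type*} [Fintype n] [Field K]

theorem finrank_ker_mulVecLin_add_rank (A : Matrix n n K) :
    finrank K (ker A.mulVecLin) + A.rank = Fintype.card n := by
  rw [add_comm, Matrix.rank, A.mulVecLin.finrank_range_add_finrank_ker,
    finrank_fintype_fun_eq_card]

theorem card_sub_one_le_rank_diagonal_sub [DecidableEq n] {d : n → K} (hd : Injective d)
    (μ : K) : Fintype.card n - 1 ≤ (diagonal fun i => d i - μ).rank := by
  classical
  have hroots : Fintype.card {i // d i - μ = 0} ≤ 1 :=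
    Fintype.card_le_one_iff.mpr fun i j => Subtype.ext <| hd <| by
      rw [sub_eq_zero.mp i.2, sub_eq_zero.mp j.2]
  rw [rank_diagonal, Fintype.card_subtype_compl]
  omega

theorem finrank_ker_sub_smul_one_le_one [DecidableEq n] {A P : Matrix n n K} {d : n → K}
    (hP : IsUnit P.det) (hAP : A * P = P * diagonal d) (hd : Injective d) (μ : K) :
    finrank K (ker (A - μ • 1).mulVecLin) ≤ 1 := by
  have hshift : (A - μ • 1) * P = P * diagonal fun i => d i - μ := by
    rw [Matrix.sub_mul, hAP, Matrix.smul_mul, Matrix.one_mul]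
    ext i j
    simp [mul_sub, mul_comm]
  have hrank : (A - μ • 1).rank = (diagonal fun i => d i - μ).rank := by
    rw [← rank_mul_eq_left_of_isUnit_det P _ hP, hshift, rank_mul_eq_right_of_isUnit_det _ _ hP]
  have := (A - μ • 1).finrank_ker_mulVecLin_add_rank
  have := card_sub_one_le_rank_diagonal_sub hd μ
  omega

end Matrix

theorem add_pos_of_nonneg_of_ne {α : Type*} [AddCommMonoid α] [PartialOrder α]
    [IsOrderedAddMonoid α] {a b : α} (ha : 0 ≤ a) (hb : 0 ≤ b) (hab : a ≠ b) : 0 < a + b :=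
  (add_nonneg ha hb).lt_of_ne fun h => hab <| by
    obtain ⟨rfl, rfl⟩ := (add_eq_zero_iff_of_nonneg ha hb).mp h.symm
    rfl

/-- Column `(k, l)` is the Bell vector `|0, k⟩ + (-1)ˡ |1, k + 1⟩`. -/
def bellBasis : Matrix (Fin 2 × Fin 2) (Fin 2 × Fin 2) ℂ :=
  Matrix.of fun ij kl => if ij.1 + ij.2 = kl.1 then (-1) ^ (kl.2.val * ij.1.val) else 0

def gen2Eigenvalues (γ a1 a2 a3 : ℝ) : Fin 2 × Fin 2 → ℂ :=
  fun kl => ![![0, ((-(2 * γ * (a1 + a2)) : ℝ) : ℂ)],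
    ![((-(2 * γ * (a2 + a3)) : ℝ) : ℂ), ((-(2 * γ * (a1 + a3)) : ℝ) : ℂ)]] kl.1 kl.2

theorem bellBasis_mul_transpose : bellBasis * ((2 : ℂ)⁻¹ • bellBasisᵀ) = 1 := by
  ext ⟨i, j⟩ ⟨k, l⟩
  fin_cases i <;> fin_cases j <;> fin_cases k <;> fin_cases l <;>
    simp [bellBasis, Matrix.mul_apply, Fintype.sum_prod_type] <;> norm_num

theorem gen2_mul_bellBasis (γ a1 a2 a3 : ℝ) :
    gen2 γ a1 a2 a3 * bellBasis = bellBasis * diagonal (gen2Eigenvalues γ a1 a2 a3) := by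
  ext ⟨i, j⟩ ⟨k, l⟩
  fin_cases i <;> fin_cases j <;> fin_cases k <;> fin_cases l <;>
    simp [gen2, bellBasis, gen2Eigenvalues, pauli1, pauli2, pauli3, Matrix.mul_apply,
      Fintype.sum_prod_type, Matrix.one_apply] <;> ring

theorem pairwise_ne_gen2_eigenvalue_list {γ a1 a2 a3 : ℝ} (hγ : 0 < γ)
    (h1 : 0 ≤ a1) (h2 : 0 ≤ a2) (h3 : 0 ≤ a3) (h12 : a1 ≠ a2) (h13 : a1 ≠ a3) (h23 : a2 ≠ a3) :
    List.Pairwise (· ≠ ·)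
      [(0 : ℂ), ((-(2 * γ * (a1 + a2)) : ℝ) : ℂ), ((-(2 * γ * (a1 + a3)) : ℝ) : ℂ),
        ((-(2 * γ * (a2 + a3)) : ℝ) : ℂ)] := by
  have p12 := add_pos_of_nonneg_of_ne h1 h2 h12
  have p13 := add_pos_of_nonneg_of_ne h1 h3 h13
  have p23 := add_pos_of_nonneg_of_ne h2 h3 h23
  have hsums : List.Pairwise (· ≠ ·) [0, a1 + a2, a1 + a3, a2 + a3] := by
    simp only [List.pairwise_cons, List.mem_cons, List.not_mem_nil, List.Pairwise.nil]
    grind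
  have hscale : Injective fun s : ℝ => ((-(2 * γ * s) : ℝ) : ℂ) :=
    Complex.ofReal_injective.comp fun s t h => by simpa [hγ.ne'] using h
  simpa only [List.map_cons, List.map_nil, mul_zero, neg_zero, Complex.ofReal_zero] using
    hsums.map _ fun _ _ h => hscale.ne h

theorem injective_gen2Eigenvalues {γ a1 a2 a3 : ℝ}
    (h : List.Pairwise (· ≠ ·)
      [(0 : ℂ), ((-(2 * γ * (a1 + a2)) : ℝ) : ℂ), ((-(2 * γ * (a1 + a3)) : ℝ) : ℂ),
        ((-(2 * γ * (a2 + a3)) : ℝ) : ℂ)]) :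
    Injective (gen2Eigenvalues γ a1 a2 a3) := by
  let indices : List (Fin 2 × Fin 2) := [(0, 0), (0, 1), (1, 1), (1, 0)]
  have hmem : ∀ kl, kl ∈ indices := by decide
  exact fun x y =>
    List.inj_on_of_nodup_map (f := gen2Eigenvalues γ a1 a2 a3) (l := indices) h (hmem x) (hmem y)

theorem gen2_index_of_cyclicity_one (γ a1 a2 a3 : ℝ) (hγ : 0 < γ)
    (h1 : 0 ≤ a1) (h2 : 0 ≤ a2) (h3 : 0 ≤ a3)
    (h12 : a1 ≠ a2) (h13 : a1 ≠ a3) (h23 : a2 ≠ a3) :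
    List.Pairwise (· ≠ ·)
      [(0 : ℂ), ((-(2 * γ * (a1 + a2)) : ℝ) : ℂ), ((-(2 * γ * (a1 + a3)) : ℝ) : ℂ),
        ((-(2 * γ * (a2 + a3)) : ℝ) : ℂ)] ∧
    ∀ lam : ℂ,
      Module.finrank ℂ
        (LinearMap.ker (gen2 γ a1 a2 a3 - lam • 1).mulVecLin) ≤ 1 := by
  have hdistinct := pairwise_ne_gen2_eigenvalue_list hγ h1 h2 h3 h12 h13 h23
  exact ⟨hdistinct, Matrix.finrank_ker_sub_smul_one_le_one
    (isUnit_det_of_right_inverse bellBasis_mul_transpose) (gen2_mul_bellBasis γ a1 a2 a3)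
    (injective_gen2Eigenvalues hdistinct)⟩

end
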